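/- arXiv:quant-ph/0511081 — 4 statements merged into one kernel-verified Lean document; each statement's English description precedes it below -/
import Mathlib

section
/- Suppose the Hermitian operator A_T on ℂ² ⊗ ℂ² has all eigenvectors of product form, i.e. A_T = Σ_{k,l} α_{(k,l)} |α_k^S⟩⟨α_k^S| ⊗ |α_l^P⟩⟨α_l^P| for orthonormal bases {|α_k^S⟩} of ℂ² and {|α_l^P⟩} of ℂ². Then for any density matrix ρ_S on ℂ² that is diagonal in the basis {|α_k^S⟩}, any density matrix ρ_P on ℂ², and any t, the evolved state ρ_S(t) = Σ_{i,j} Tr_P(|α_i⟩⟨α_j|) (ρ_S ⊗ ρ_P)_{ij} γ_{ij}(t) equals ρ_S. -/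
open Complex Matrix Kronecker ComplexOrder

noncomputable section

/-- Outer product |v⟩⟨w| of vectors. -/
def outer {n : Type*} [Fintype n] (v w : n → ℂ) : Matrix n n ℂ :=
  fun x y => v x * (starRingEnd ℂ) (w y)

/-- Partial trace over the second tensor factor. -/
def trP (M : Matrix (Fin 2 × Fin 2) (Fin 2 × Fin 2) ℂ) : Matrix (Fin 2) (Fin 2) ℂ :=
  fun x y => ∑ c : Fin 2, M (x, c) (y, c)

/-- Matrix element ⟨v| M |w⟩. -/
def melem {n : Type*} [Fintype n] (M : Matrix n n ℂ) (v w : n → ℂ) : ℂ :=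
  ∑ x, ∑ y, (starRingEnd ℂ) (v x) * M x y * w y

/-- The decoherence functions γ_{ij}(t) = exp(-(α_i-α_j)² f(t) + i(α_i²-α_j²) φ(t)). -/
def gam {ι : Type*} (α : ι → ℝ) (f φ : ℝ → ℝ) (i j : ι) (t : ℝ) : ℂ :=
  Complex.exp (-(((α i - α j) ^ 2 * f t : ℝ) : ℂ)
    + Complex.I * (((α i ^ 2 - α j ^ 2) * φ t : ℝ) : ℂ))

/-- Completeness: an orthonormal family of 2 vectors in ℂ² satisfies the resolution
of the identity. -/
lemma complete (v : Fin 2 → Fin 2 → ℂ)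
    (hv : ∀ k m, (∑ x, (starRingEnd ℂ) (v k x) * v m x) = if k = m then 1 else 0) :
    ∀ a b, (∑ k, (starRingEnd ℂ) (v k a) * v k b) = if a = b then 1 else 0 := by
  have h1 : (Matrix.of v) * (Matrix.of v)ᴴ = 1 := by
    ext m k
    simp only [Matrix.mul_apply, Matrix.conjTranspose_apply, Matrix.of_apply,
      Matrix.one_apply]
    calc (∑ x, v m x * star (v k x))
        = ∑ x, (starRingEnd ℂ) (v k x) * v m x := by
          refine Finset.sum_congr rfl fun _ _ => ?_
          rw [← starRingEnd_apply]; ring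
      _ = if k = m then 1 else 0 := hv k m
      _ = if m = k then 1 else 0 := by simp [eq_comm]
  have h2 := mul_eq_one_comm.mp h1
  intro a b
  have h3 := congrFun (congrFun h2 a) b
  simp only [Matrix.mul_apply, Matrix.conjTranspose_apply, Matrix.of_apply,
    Matrix.one_apply] at h3
  calc (∑ k, (starRingEnd ℂ) (v k a) * v k b)
      = ∑ k, star (v k a) * v k b := by
        refine Finset.sum_congr rfl fun _ _ => ?_
        rw [← starRingEnd_apply]
    _ = if a = b then 1 else 0 := h3

lemma melem_kron (ρS ρP : Matrix (Fin 2) (Fin 2) ℂ) (a b c d : Fin 2 → ℂ) :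
    melem (ρS ⊗ₖ ρP) (fun q => a q.1 * b q.2) (fun q => c q.1 * d q.2)
      = melem ρS a c * melem ρP b d := by
  simp only [melem, Fintype.sum_prod_type, kroneckerMap_apply, _root_.map_mul]
  simp only [Fin.sum_univ_two]
  ring

/-- Reconstruction: expanding a matrix in an orthonormal basis. -/
lemma recon (v : Fin 2 → Fin 2 → ℂ)
    (comp : ∀ a b, (∑ k, (starRingEnd ℂ) (v k a) * v k b) = if a = b then 1 else 0)
    (ρ : Matrix (Fin 2) (Fin 2) ℂ) (x y : Fin 2) :
    (∑ k, ∑ m, melem ρ (v k) (v m) * (v k x * (starRingEnd ℂ) (v m y))) = ρ x y := by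
  have comp2 : ∀ a b, (∑ m, v m a * (starRingEnd ℂ) (v m b)) = if a = b then 1 else 0 := by
    intro a b
    have := congrArg (starRingEnd ℂ) (comp a b)
    simpa [map_sum, _root_.map_mul, apply_ite, mul_comm] using this
  calc (∑ k, ∑ m, melem ρ (v k) (v m) * (v k x * (starRingEnd ℂ) (v m y)))
      = ∑ a, ∑ b, ρ a b * ((∑ k, (starRingEnd ℂ) (v k a) * v k x)
          * (∑ m, v m b * (starRingEnd ℂ) (v m y))) := by
        simp only [melem, Fin.sum_univ_two]; ring
    _ = ρ x y := by
        simp only [comp, comp2]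
        simp [Finset.sum_ite_eq, Finset.sum_ite_eq', mul_ite, mul_one, mul_zero,
          ite_mul, zero_mul, one_mul]

/-- If A_T has product eigenvectors |α_k^S⟩ ⊗ |α_l^P⟩ (orthonormal bases of ℂ²,
eigenvalues α_{(k,l)}), then any density matrix ρ_S that is diagonal in the basis
{|α_k^S⟩} does not evolve: ρ_S(t) = ρ_S for all t. -/
theorem stmt3 (vS vP : Fin 2 → Fin 2 → ℂ)
    (hvS : ∀ k m, (∑ x, (starRingEnd ℂ) (vS k x) * vS m x) = if k = m then 1 else 0)
    (hvP : ∀ k m, (∑ x, (starRingEnd ℂ) (vP k x) * vP m x) = if k = m then 1 else 0)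
    (α : Fin 2 × Fin 2 → ℝ) (f φ : ℝ → ℝ) (hf : ∀ t, 0 ≤ f t)
    (ρS ρP : Matrix (Fin 2) (Fin 2) ℂ)
    (hρS : ρS.PosSemidef) (hρStr : ρS.trace = 1)
    (hρP : ρP.PosSemidef) (hρPtr : ρP.trace = 1)
    (hdiag : ∀ k m : Fin 2, k ≠ m →
      (∑ x, ∑ y, (starRingEnd ℂ) (vS k x) * ρS x y * vS m y) = 0) :
    ∀ t : ℝ,
      (∑ i : Fin 2 × Fin 2, ∑ j : Fin 2 × Fin 2,
        (melem (ρS ⊗ₖ ρP) (fun q => vS i.1 q.1 * vP i.2 q.2)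
            (fun q => vS j.1 q.1 * vP j.2 q.2) * gam α f φ i j t)
          • trP (outer (fun q => vS i.1 q.1 * vP i.2 q.2)
              (fun q => vS j.1 q.1 * vP j.2 q.2)))
      = ρS := by
  intro t
  have hvP2 : ∀ k m, (∑ x, vP k x * (starRingEnd ℂ) (vP m x)) = if k = m then 1 else 0 := by
    intro k m
    have := congrArg (starRingEnd ℂ) (hvP k m)
    simpa [map_sum, _root_.map_mul, apply_ite, mul_comm] using this
  have hg : ∀ i : Fin 2 × Fin 2, gam α f φ i i t = 1 := by
    intro i; simp [gam]
  ext x y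
  simp only [Matrix.sum_apply, Matrix.smul_apply, smul_eq_mul]
  have htr : ∀ i j : Fin 2 × Fin 2,
      trP (outer (fun q : Fin 2 × Fin 2 => vS i.1 q.1 * vP i.2 q.2)
        (fun q : Fin 2 × Fin 2 => vS j.1 q.1 * vP j.2 q.2)) x y
      = vS i.1 x * (starRingEnd ℂ) (vS j.1 y) * (if i.2 = j.2 then 1 else 0) := by
    intro i j
    have h : trP (outer (fun q : Fin 2 × Fin 2 => vS i.1 q.1 * vP i.2 q.2)
        (fun q : Fin 2 × Fin 2 => vS j.1 q.1 * vP j.2 q.2)) x y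
        = vS i.1 x * (starRingEnd ℂ) (vS j.1 y)
          * (∑ c, vP i.2 c * (starRingEnd ℂ) (vP j.2 c)) := by
      simp only [trP, outer, _root_.map_mul, Finset.mul_sum]
      refine Finset.sum_congr rfl fun _ _ => ?_; ring
    rw [h, hvP2]
  have hterm : ∀ i j : Fin 2 × Fin 2,
      melem (ρS ⊗ₖ ρP) (fun q => vS i.1 q.1 * vP i.2 q.2)
          (fun q => vS j.1 q.1 * vP j.2 q.2) * gam α f φ i j t
        * trP (outer (fun q => vS i.1 q.1 * vP i.2 q.2)
            (fun q => vS j.1 q.1 * vP j.2 q.2)) x y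
      = if i = j then melem ρS (vS i.1) (vS i.1) * melem ρP (vP i.2) (vP i.2)
          * (vS i.1 x * (starRingEnd ℂ) (vS i.1 y)) else 0 := by
    intro i j
    rw [melem_kron, htr]
    by_cases h1 : i.1 = j.1
    · by_cases h2 : i.2 = j.2
      · have hij : i = j := Prod.ext h1 h2
        subst hij
        simp [hg]
      · simp [h2, Prod.ext_iff]
    · have h0 : melem ρS (vS i.1) (vS j.1) = 0 := hdiag i.1 j.1 h1
      simp [h0, Prod.ext_iff, h1]
  calc (∑ i : Fin 2 × Fin 2, ∑ j : Fin 2 × Fin 2,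
        melem (ρS ⊗ₖ ρP) (fun q => vS i.1 q.1 * vP i.2 q.2)
          (fun q => vS j.1 q.1 * vP j.2 q.2) * gam α f φ i j t
        * trP (outer (fun q => vS i.1 q.1 * vP i.2 q.2)
            (fun q => vS j.1 q.1 * vP j.2 q.2)) x y)
      = ∑ i : Fin 2 × Fin 2, melem ρS (vS i.1) (vS i.1) * melem ρP (vP i.2) (vP i.2)
          * (vS i.1 x * (starRingEnd ℂ) (vS i.1 y)) := by
        refine Finset.sum_congr rfl fun i _ => ?_
        rw [Finset.sum_congr rfl fun j _ => hterm i j]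
        simp
    _ = (∑ k, melem ρS (vS k) (vS k) * (vS k x * (starRingEnd ℂ) (vS k y)))
          * (∑ l, melem ρP (vP l) (vP l)) := by
        rw [Fintype.sum_prod_type]
        simp only [Fin.sum_univ_two]
        ring
    _ = ∑ k, melem ρS (vS k) (vS k) * (vS k x * (starRingEnd ℂ) (vS k y)) := by
        have hP1 : (∑ l, melem ρP (vP l) (vP l)) = 1 := by
          have compP := complete vP hvP
          have h : (∑ l, melem ρP (vP l) (vP l))
              = ∑ a, ∑ b, ρP a b * (∑ l, (starRingEnd ℂ) (vP l a) * vP l b) := by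
            simp only [melem, Fin.sum_univ_two]; ring
          rw [h]
          simp only [compP, mul_ite, mul_one, mul_zero, Finset.sum_ite_eq,
            Finset.mem_univ, if_true]
          simpa [Matrix.trace, Matrix.diag] using hρPtr
        rw [hP1, mul_one]
    _ = ∑ k, ∑ m, melem ρS (vS k) (vS m) * (vS k x * (starRingEnd ℂ) (vS m y)) := by
        refine Finset.sum_congr rfl fun k _ => ?_
        symm
        apply Finset.sum_eq_single k
        · intro m _ hm
          have h0 : melem ρS (vS k) (vS m) = 0 := hdiag k m (Ne.symm hm)
          rw [h0, zero_mul]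
        · intro h; exact absurd (Finset.mem_univ k) h
    _ = ρS x y := recon vS (complete vS hvS) ρS x y
end
end

section
/- With A_T having product eigenvectors as above, the evolved state satisfies ρ_S(t) = Σ_{k,m} (ρ_S)_{km} |α_k^S⟩⟨α_m^S| · Σ_n (ρ_P)_{nn} γ_{(k,n)(m,n)}(t); in particular the diagonal entries of ρ_S(t) in the basis {|α_k^S⟩} equal those of ρ_S for all t. -/
/-! Because the eigenvectors of `A_T` are products, the matrix elements of `ρ_S ⊗ ρ_P` factor, and
the partial trace of `|α_k^S α_n^P⟩⟨α_m^S α_l^P|` is `δ_{nl} |α_k^S⟩⟨α_m^S|`; this leaves only the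
terms with equal pointer index and gives the formula for `ρ_S(t)`. On the diagonal
`γ_{(k,n)(k,n)} = 1`, and `Σ_n (ρ_P)_{nn} = Tr ρ_P = 1`. -/

open Complex Matrix Kronecker ComplexOrder

noncomputable section

open ComplexConjugate

section Orthonormal

variable {n : Type*} [Fintype n] [DecidableEq n]

lemma sum_mul_conj_eq_ite_of_orthonormal {v : n → n → ℂ}
    (hv : ∀ k m, (∑ x, conj (v k x) * v m x) = if k = m then 1 else 0) (k m : n) :
    (∑ x, v k x * conj (v m x)) = if k = m then 1 else 0 := by
  simpa using congrArg conj (hv k m)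

/-- Orthonormal rows force orthonormal columns: `UUᴴ = 1 ⇒ UᴴU = 1` for the square `U = of v`. -/
lemma sum_conj_mul_eq_ite_of_orthonormal {v : n → n → ℂ}
    (hv : ∀ k m, (∑ x, conj (v k x) * v m x) = if k = m then 1 else 0) (x y : n) :
    (∑ k, conj (v k x) * v k y) = if x = y then 1 else 0 := by
  have hrows : Matrix.of v * (Matrix.of v)ᴴ = 1 := by
    ext k m
    simpa [Matrix.mul_apply, Matrix.one_apply] using sum_mul_conj_eq_ite_of_orthonormal hv k m
  have hcols := congrArg (fun M : Matrix n n ℂ => M x y) (mul_eq_one_comm.mp hrows)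
  simpa [Matrix.mul_apply, Matrix.one_apply] using hcols

end Orthonormal

section Melem

variable {n : Type*} [Fintype n]

lemma melem_sum {ι : Type*} (s : Finset ι) (M : ι → Matrix n n ℂ) (v w : n → ℂ) :
    melem (∑ i ∈ s, M i) v w = ∑ i ∈ s, melem (M i) v w := by
  simp only [melem, Matrix.sum_apply, Finset.mul_sum, Finset.sum_mul]
  conv_rhs => rw [Finset.sum_comm]
  exact Finset.sum_congr rfl fun _ _ => Finset.sum_comm

lemma melem_smul (c : ℂ) (M : Matrix n n ℂ) (v w : n → ℂ) :
    melem (c • M) v w = c * melem M v w := by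
  simp only [melem, Matrix.smul_apply, smul_eq_mul, Finset.mul_sum]
  exact Finset.sum_congr rfl fun _ _ => Finset.sum_congr rfl fun _ _ => by ring

lemma melem_outer (a b u w : n → ℂ) :
    melem (outer a b) u w = (∑ x, conj (u x) * a x) * ∑ y, conj (b y) * w y := by
  simp only [melem, outer, Finset.sum_mul_sum]
  exact Finset.sum_congr rfl fun _ _ => Finset.sum_congr rfl fun _ _ => by ring

lemma melem_kronecker {m : Type*} [Fintype m] (A : Matrix n n ℂ) (B : Matrix m m ℂ)
    (a c : n → ℂ) (b d : m → ℂ) :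
    melem (A ⊗ₖ B) (fun q => a q.1 * b q.2) (fun q => c q.1 * d q.2)
      = melem A a c * melem B b d := by
  simp only [melem, Fintype.sum_prod_type, kroneckerMap_apply, map_mul, Finset.sum_mul_sum]
  exact Finset.sum_congr rfl fun _ _ => Finset.sum_congr rfl fun _ _ =>
    Finset.sum_congr rfl fun _ _ => Finset.sum_congr rfl fun _ _ => by ring

lemma sum_melem_self_eq_trace [DecidableEq n] {v : n → n → ℂ}
    (hv : ∀ k m, (∑ x, conj (v k x) * v m x) = if k = m then 1 else 0) (M : Matrix n n ℂ) :
    (∑ k, melem M (v k) (v k)) = M.trace := by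
  calc (∑ k, melem M (v k) (v k))
      = ∑ x, ∑ y, M x y * ∑ k, conj (v k x) * v k y := by
        simp only [melem, Finset.mul_sum]
        rw [Finset.sum_comm]
        refine Finset.sum_congr rfl fun _ _ => ?_
        rw [Finset.sum_comm]
        exact Finset.sum_congr rfl fun _ _ => Finset.sum_congr rfl fun _ _ => by ring
    _ = M.trace := by
        simp [sum_conj_mul_eq_ite_of_orthonormal hv, Matrix.trace]

lemma melem_sum_smul_outer_self [DecidableEq n] {v : n → n → ℂ}
    (hv : ∀ k m, (∑ x, conj (v k x) * v m x) = if k = m then 1 else 0)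
    (c : n → n → ℂ) (p : n) :
    melem (∑ k, ∑ m, c k m • outer (v k) (v m)) (v p) (v p) = c p p := by
  simp [melem_sum, melem_smul, melem_outer, hv]

end Melem

lemma trP_outer (a c b d : Fin 2 → ℂ) :
    trP (outer (fun q => a q.1 * b q.2) (fun q => c q.1 * d q.2))
      = (∑ x, b x * conj (d x)) • outer a c := by
  ext x y
  simp only [trP, outer, Matrix.smul_apply, smul_eq_mul, map_mul, Finset.sum_mul]
  exact Finset.sum_congr rfl fun _ _ => by ring

lemma gam_self {ι : Type*} (α : ι → ℝ) (f φ : ℝ → ℝ) (i : ι) (t : ℝ) :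
    gam α f φ i i t = 1 := by
  simp [gam]

lemma sum_prod_sum_prod_ite_snd {M ι κ : Type*} [AddCommMonoid M] [Fintype ι] [Fintype κ]
    [DecidableEq κ] (F : ι × κ → ι × κ → M) :
    (∑ i, ∑ j, if i.2 = j.2 then F i j else 0) = ∑ k, ∑ m, ∑ n, F (k, n) (m, n) := by
  simp only [Fintype.sum_prod_type, Finset.sum_ite_eq, Finset.mem_univ, if_true]
  exact Finset.sum_congr rfl fun _ _ => Finset.sum_comm

lemma evolved_state_eq (vS vP : Fin 2 → Fin 2 → ℂ)
    (hvP : ∀ k m, (∑ x, conj (vP k x) * vP m x) = if k = m then 1 else 0)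
    (α : Fin 2 × Fin 2 → ℝ) (f φ : ℝ → ℝ) (ρS ρP : Matrix (Fin 2) (Fin 2) ℂ) (t : ℝ) :
    (∑ i : Fin 2 × Fin 2, ∑ j : Fin 2 × Fin 2,
        (melem (ρS ⊗ₖ ρP) (fun q => vS i.1 q.1 * vP i.2 q.2)
            (fun q => vS j.1 q.1 * vP j.2 q.2) * gam α f φ i j t)
          • trP (outer (fun q => vS i.1 q.1 * vP i.2 q.2)
              (fun q => vS j.1 q.1 * vP j.2 q.2)))
      = ∑ k : Fin 2, ∑ m : Fin 2,
          ((melem ρS (vS k) (vS m))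
              * ∑ n : Fin 2, melem ρP (vP n) (vP n) * gam α f φ (k, n) (m, n) t)
            • outer (vS k) (vS m) := by
  have hterm : ∀ i j : Fin 2 × Fin 2,
      (melem (ρS ⊗ₖ ρP) (fun q => vS i.1 q.1 * vP i.2 q.2)
            (fun q => vS j.1 q.1 * vP j.2 q.2) * gam α f φ i j t)
          • trP (outer (fun q => vS i.1 q.1 * vP i.2 q.2) (fun q => vS j.1 q.1 * vP j.2 q.2))
        = if i.2 = j.2 then
            (melem ρS (vS i.1) (vS j.1) * melem ρP (vP i.2) (vP j.2) * gam α f φ i j t)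
              • outer (vS i.1) (vS j.1)
          else 0 := by
    intro i j
    rw [melem_kronecker, trP_outer, sum_mul_conj_eq_ite_of_orthonormal hvP, smul_smul]
    split_ifs <;> simp
  simp only [hterm, sum_prod_sum_prod_ite_snd, Finset.mul_sum, Finset.sum_smul, mul_assoc]

theorem stmt4_general (vS vP : Fin 2 → Fin 2 → ℂ)
    (hvS : ∀ k m, (∑ x, (starRingEnd ℂ) (vS k x) * vS m x) = if k = m then 1 else 0)
    (hvP : ∀ k m, (∑ x, (starRingEnd ℂ) (vP k x) * vP m x) = if k = m then 1 else 0)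
    (α : Fin 2 × Fin 2 → ℝ) (f φ : ℝ → ℝ)
    (ρS ρP : Matrix (Fin 2) (Fin 2) ℂ)
    (hρPtr : ρP.trace = 1) :
    ∀ t : ℝ,
      (∑ i : Fin 2 × Fin 2, ∑ j : Fin 2 × Fin 2,
        (melem (ρS ⊗ₖ ρP) (fun q => vS i.1 q.1 * vP i.2 q.2)
            (fun q => vS j.1 q.1 * vP j.2 q.2) * gam α f φ i j t)
          • trP (outer (fun q => vS i.1 q.1 * vP i.2 q.2)
              (fun q => vS j.1 q.1 * vP j.2 q.2)))
      = ∑ k : Fin 2, ∑ m : Fin 2,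
          ((melem ρS (vS k) (vS m))
              * ∑ n : Fin 2, melem ρP (vP n) (vP n) * gam α f φ (k, n) (m, n) t)
            • outer (vS k) (vS m) ∧
      ∀ k : Fin 2,
        melem (∑ i : Fin 2 × Fin 2, ∑ j : Fin 2 × Fin 2,
          (melem (ρS ⊗ₖ ρP) (fun q => vS i.1 q.1 * vP i.2 q.2)
              (fun q => vS j.1 q.1 * vP j.2 q.2) * gam α f φ i j t)
            • trP (outer (fun q => vS i.1 q.1 * vP i.2 q.2)
                (fun q => vS j.1 q.1 * vP j.2 q.2))) (vS k) (vS k)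
        = melem ρS (vS k) (vS k) := by
  intro t
  have hstate := evolved_state_eq vS vP hvP α f φ ρS ρP t
  refine ⟨hstate, fun k => ?_⟩
  simp only [hstate, melem_sum_smul_outer_self hvS, gam_self, mul_one,
    sum_melem_self_eq_trace hvP, hρPtr]

/-- With A_T having product eigenvectors, the evolved state is
ρ_S(t) = Σ_{k,m} (ρ_S)_{km} |α_k^S⟩⟨α_m^S| Σ_n (ρ_P)_{nn} γ_{(k,n)(m,n)}(t);
in particular its diagonal entries in the basis {|α_k^S⟩} equal those of ρ_S. -/
theorem stmt4 (vS vP : Fin 2 → Fin 2 → ℂ)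
    (hvS : ∀ k m, (∑ x, (starRingEnd ℂ) (vS k x) * vS m x) = if k = m then 1 else 0)
    (hvP : ∀ k m, (∑ x, (starRingEnd ℂ) (vP k x) * vP m x) = if k = m then 1 else 0)
    (α : Fin 2 × Fin 2 → ℝ) (f φ : ℝ → ℝ) (hf : ∀ t, 0 ≤ f t)
    (ρS ρP : Matrix (Fin 2) (Fin 2) ℂ)
    (hρS : ρS.PosSemidef) (hρStr : ρS.trace = 1)
    (hρP : ρP.PosSemidef) (hρPtr : ρP.trace = 1) :
    ∀ t : ℝ,
      (∑ i : Fin 2 × Fin 2, ∑ j : Fin 2 × Fin 2,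
        (melem (ρS ⊗ₖ ρP) (fun q => vS i.1 q.1 * vP i.2 q.2)
            (fun q => vS j.1 q.1 * vP j.2 q.2) * gam α f φ i j t)
          • trP (outer (fun q => vS i.1 q.1 * vP i.2 q.2)
              (fun q => vS j.1 q.1 * vP j.2 q.2)))
      = ∑ k : Fin 2, ∑ m : Fin 2,
          ((melem ρS (vS k) (vS m))
              * ∑ n : Fin 2, melem ρP (vP n) (vP n) * gam α f φ (k, n) (m, n) t)
            • outer (vS k) (vS m) ∧
      ∀ k : Fin 2,
        melem (∑ i : Fin 2 × Fin 2, ∑ j : Fin 2 × Fin 2,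
          (melem (ρS ⊗ₖ ρP) (fun q => vS i.1 q.1 * vP i.2 q.2)
              (fun q => vS j.1 q.1 * vP j.2 q.2) * gam α f φ i j t)
            • trP (outer (fun q => vS i.1 q.1 * vP i.2 q.2)
                (fun q => vS j.1 q.1 * vP j.2 q.2))) (vS k) (vS k)
        = melem ρS (vS k) (vS k) :=
  stmt4_general vS vP hvS hvP α f φ ρS ρP hρPtr
end
end

section
/- In the degenerate Bell-basis model (α₁=α₂=α₃=0, α₄≠0), if at some time t̂ one has f(t̂) = 0 and α₄² φ(t̂) = (2k+1)π for some integer k, then A(t̂, s₀) is the 3×3 identity matrix and a(t̂, s₀) = 0; consequently, as ρ_P ranges over all states of ℂ², the Bloch vector of ρ_S(t̂) ranges over the entire Bloch ball, i.e. the system is controllable at time t̂. -/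
open Matrix

/-- In the degenerate Bell-basis model, if f(t̂) = 0 and α₄² φ(t̂) = (2k+1)π, then
A(t̂,s₀) = I and a(t̂,s₀) = 0, and the reachable set of Bloch vectors at time t̂ is the
whole Bloch ball: the system is controllable at time t̂. -/
theorem stmt7 (α4 : ℝ) (hα4 : α4 ≠ 0) (f φ : ℝ → ℝ) (hf : ∀ t, 0 ≤ f t)
    (s₀ : Fin 3 → ℝ) (hs₀ : (∑ i, s₀ i ^ 2) ≤ 1)
    (γr γi : ℝ → ℝ)
    (hγr : ∀ t, γr t = Real.exp (-α4 ^ 2 * f t) * Real.cos (α4 ^ 2 * φ t))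
    (hγi : ∀ t, γi t = Real.exp (-α4 ^ 2 * f t) * Real.sin (α4 ^ 2 * φ t))
    (S : Matrix (Fin 3) (Fin 3) ℝ)
    (hS : S = !![0, s₀ 2, -(s₀ 1); -(s₀ 2), 0, s₀ 0; s₀ 1, -(s₀ 0), 0])
    (A : ℝ → Matrix (Fin 3) (Fin 3) ℝ) (a : ℝ → Fin 3 → ℝ)
    (hA : ∀ t, A t = (1 / 2 : ℝ) •
      ((1 - γr t) • (1 : Matrix (Fin 3) (Fin 3) ℝ) + γi t • S))
    (ha : ∀ t, a t = ((1 + γr t) / 2) • s₀)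
    (tc : ℝ) (hftc : f tc = 0) (k : ℤ)
    (hφtc : α4 ^ 2 * φ tc = (2 * (k : ℝ) + 1) * Real.pi) :
    A tc = 1 ∧ a tc = 0 ∧
    {v : Fin 3 → ℝ | ∃ p : Fin 3 → ℝ, (∑ i, p i ^ 2) ≤ 1 ∧ v = A tc *ᵥ p + a tc}
      = {v : Fin 3 → ℝ | (∑ i, v i ^ 2) ≤ 1} := by
  have hrw : α4 ^ 2 * φ tc = (k : ℝ) * (2 * Real.pi) + Real.pi := by
    rw [hφtc]; ring
  have hcos : Real.cos (α4 ^ 2 * φ tc) = -1 := by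
    rw [hrw]; exact Real.cos_int_mul_two_pi_add_pi k
  have hsin : Real.sin (α4 ^ 2 * φ tc) = 0 := by
    have : α4 ^ 2 * φ tc = ((2 * k + 1 : ℤ) : ℝ) * Real.pi := by
      rw [hφtc]; push_cast; ring
    rw [this, Real.sin_int_mul_pi]
  have hγrtc : γr tc = -1 := by
    rw [hγr, hftc, hcos]; simp
  have hγitc : γi tc = 0 := by
    rw [hγi, hftc, hsin]; simp
  have hAtc : A tc = 1 := by
    rw [hA, hγrtc, hγitc]
    norm_num [smul_smul]
  have hatc : a tc = 0 := by
    rw [ha, hγrtc]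
    norm_num
  refine ⟨hAtc, hatc, ?_⟩
  ext v
  simp only [Set.mem_setOf_eq, hAtc, hatc, Matrix.one_mulVec, add_zero]
  constructor
  · rintro ⟨p, hp, rfl⟩; exact hp
  · intro hv; exact ⟨v, hv, rfl⟩
end

section
/- For the affine Bloch dynamics s(t) = A(t,s₀)p + a(t,s₀) of the degenerate Bell model with A = (1/2)[(1-γ_r)I + γ_i S(s₀)] and a = (1/2)(1+γ_r)s₀, the norm of the evolved Bloch vector satisfies |s(t)| ≤ 1 whenever |p| ≤ 1, |s₀| ≤ 1 and γ_r² + γ_i² ≤ 1, i.e. the map sends physical states to physical states. -/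
lemma key19 (a b c γr γi : ℝ) (ha0 : 0 ≤ a) (hb0 : 0 ≤ b) (ha : a ≤ 1) (hb : b ≤ 1)
    (hc : c ^ 2 ≤ a * b) (hγ : γr ^ 2 + γi ^ 2 ≤ 1) :
    (1/4) * ((1 - γr)^2 * a + γi^2 * (a * b - c^2)) + (1/2) * (1 - γr^2) * c
      + (1/4) * (1 + γr)^2 * b ≤ 1 := by
  have hγr : γr ^ 2 ≤ 1 := by nlinarith [sq_nonneg γi]
  have hab : a * b ≤ 1 := by nlinarith
  have h1 : 0 ≤ (1 - γr)^2 * (1 - a) := mul_nonneg (sq_nonneg _) (by linarith)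
  have h2 : 0 ≤ (1 + γr)^2 * (1 - b) := mul_nonneg (sq_nonneg _) (by linarith)
  have h3 : 0 ≤ (1 - γr^2) * ((1 - c)^2 + (1 - a*b)) :=
    mul_nonneg (by linarith) (by nlinarith [sq_nonneg (1 - c)])
  have h4 : 0 ≤ (a * b - c^2) * (1 - γr^2 - γi^2) :=
    mul_nonneg (by linarith) (by linarith)
  nlinarith [h1, h2, h3, h4]

/-- The affine Bloch dynamics of the degenerate Bell model maps physical states to
physical states: if |s₀| ≤ 1, |p| ≤ 1 and γ_r² + γ_i² ≤ 1, then
|(1/2)[(1-γ_r)p + γ_i (s₀ × p)] + (1/2)(1+γ_r)s₀| ≤ 1. -/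
theorem stmt19 (γr γi : ℝ) (hγ : γr ^ 2 + γi ^ 2 ≤ 1)
    (s₀ p : Fin 3 → ℝ) (hs₀ : (∑ i, s₀ i ^ 2) ≤ 1) (hp : (∑ i, p i ^ 2) ≤ 1) :
    (∑ i, ((1 / 2) * ((1 - γr) * p i + γi * (crossProduct s₀ p) i)
        + (1 / 2) * (1 + γr) * s₀ i) ^ 2) ≤ 1 := by
  have hb0 : (0:ℝ) ≤ ∑ i, s₀ i ^ 2 := Finset.sum_nonneg fun i _ => sq_nonneg _
  have ha0 : (0:ℝ) ≤ ∑ i, p i ^ 2 := Finset.sum_nonneg fun i _ => sq_nonneg _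
  have hc : (∑ i, p i * s₀ i) ^ 2 ≤ (∑ i, p i ^ 2) * (∑ i, s₀ i ^ 2) := by
    exact Finset.sum_mul_sq_le_sq_mul_sq Finset.univ p s₀
  have key := key19 (∑ i, p i ^ 2) (∑ i, s₀ i ^ 2) (∑ i, p i * s₀ i) γr γi ha0 hb0 hp hs₀ hc hγ
  calc (∑ i, ((1 / 2) * ((1 - γr) * p i + γi * (crossProduct s₀ p) i)
        + (1 / 2) * (1 + γr) * s₀ i) ^ 2)
      = (1/4) * ((1 - γr)^2 * (∑ i, p i ^ 2) + γi^2 * ((∑ i, p i ^ 2) * (∑ i, s₀ i ^ 2) - (∑ i, p i * s₀ i)^2)) + (1/2) * (1 - γr^2) * (∑ i, p i * s₀ i)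
      + (1/4) * (1 + γr)^2 * (∑ i, s₀ i ^ 2) := by
        simp [Fin.sum_univ_three, crossProduct]
        ring
    _ ≤ 1 := key
end
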